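/- Let u : ℝ³ → ℝ be a smooth solution of the rotated Euler equation u_{txy} = J(u, u_{xy}), and let A : ℝ → ℝ be an arbitrary smooth function. Then the function φ₆(A) := −A(t) u_x + A′(t) y satisfies the linearized equation ℓ_F(φ₆(A)) = 0 at every point, i.e. φ₆(A) generates an infinitesimal symmetry of the equation for every smooth A. -/

import Mathlib

noncomputable section

/-- Partial derivative in `t` of a function on `ℝ³ = ℝ × ℝ × ℝ` (coordinates `(t, x, y)`). -/
def Dt (f : ℝ × ℝ × ℝ → ℝ) : ℝ × ℝ × ℝ → ℝ := fun r => fderiv ℝ f r (1, 0, 0)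

/-- Partial derivative in `x`. -/
def Dx (f : ℝ × ℝ × ℝ → ℝ) : ℝ × ℝ × ℝ → ℝ := fun r => fderiv ℝ f r (0, 1, 0)

/-- Partial derivative in `y`. -/
def Dy (f : ℝ × ℝ × ℝ → ℝ) : ℝ × ℝ × ℝ → ℝ := fun r => fderiv ℝ f r (0, 0, 1)

/-- The Jacobian bracket `J(a,b) = aₓ b_y − a_y bₓ`. -/
def Jb (a b : ℝ × ℝ × ℝ → ℝ) : ℝ × ℝ × ℝ → ℝ :=
  fun r => Dx a r * Dy b r - Dy a r * Dx b r

/-- `E(u) = x uₓ + y u_y − 2 u`. -/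
def Ee (u : ℝ × ℝ × ℝ → ℝ) : ℝ × ℝ × ℝ → ℝ :=
  fun r => r.2.1 * Dx u r + r.2.2 * Dy u r - 2 * u r

/-- The linearization operator `ℓ_F(q) = q_txy − J(q, u_xy) − J(u, q_xy)` of the
rotated Euler equation `u_txy = J(u, u_xy)`. -/
def lF (u q : ℝ × ℝ × ℝ → ℝ) : ℝ × ℝ × ℝ → ℝ :=
  fun r => Dt (Dx (Dy q)) r - Jb q (Dx (Dy u)) r - Jb u (Dx (Dy q)) r

/-- The adjoint linearization operator `ℓ*_F(p) = −(p_t − J(u,p))_xy − J(u_xy, p)` of the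
rotated Euler equation. -/
def lFs (u p : ℝ × ℝ × ℝ → ℝ) : ℝ × ℝ × ℝ → ℝ :=
  fun r => -(Dx (Dy (fun z => Dt p z - Jb u p z)) r) - Jb (Dx (Dy u)) p r

/-- The Laplacian `Δf = f_xx + f_yy` (in the spatial variables `x`, `y`). -/
def Lap (f : ℝ × ℝ × ℝ → ℝ) : ℝ × ℝ × ℝ → ℝ :=
  fun r => Dx (Dx f) r + Dy (Dy f) r

/-- The linearization operator `ℓ_F(q) = Δq_t − J(q, Δu) − J(u, Δq)` of the
two-dimensional Euler equation `Δu_t = J(u, Δu)`. -/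
def lFD (u q : ℝ × ℝ × ℝ → ℝ) : ℝ × ℝ × ℝ → ℝ :=
  fun r => Lap (Dt q) r - Jb q (Lap u) r - Jb u (Lap q) r

/-- The adjoint linearization operator `ℓ*_F(p) = −Δ(p_t − J(u,p)) − J(Δu, p)` of the
two-dimensional Euler equation. -/
def lFsD (u p : ℝ × ℝ × ℝ → ℝ) : ℝ × ℝ × ℝ → ℝ :=
  fun r => -(Lap (fun z => Dt p z - Jb u p z) r) - Jb (Lap u) p r

namespace Aux7

def DD (v : ℝ × ℝ × ℝ) (f : ℝ × ℝ × ℝ → ℝ) : ℝ × ℝ × ℝ → ℝ := fun r => fderiv ℝ f r v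

lemma Dt_eq (f) : Dt f = DD (1,0,0) f := rfl
lemma Dx_eq (f) : Dx f = DD (0,1,0) f := rfl
lemma Dy_eq (f) : Dy f = DD (0,0,1) f := rfl

lemma smooth_DD {f} (hf : ContDiff ℝ (⊤ : ℕ∞) f) (v) : ContDiff ℝ (⊤ : ℕ∞) (DD v f) :=
  (hf.fderiv_right (by simp)).clm_apply contDiff_const

lemma smooth_Dx {f} (hf : ContDiff ℝ (⊤ : ℕ∞) f) : ContDiff ℝ (⊤ : ℕ∞) (Dx f) := smooth_DD hf _
lemma smooth_Dy {f} (hf : ContDiff ℝ (⊤ : ℕ∞) f) : ContDiff ℝ (⊤ : ℕ∞) (Dy f) := smooth_DD hf _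

lemma diff_of_smooth {f : ℝ × ℝ × ℝ → ℝ} (hf : ContDiff ℝ (⊤ : ℕ∞) f) : Differentiable ℝ f :=
  hf.differentiable (by simp)

lemma DD_comm {f} (hf : ContDiff ℝ (⊤ : ℕ∞) f) (v w) : DD v (DD w f) = DD w (DD v f) := by
  funext r
  have hdf : Differentiable ℝ (fderiv ℝ f) := (hf.fderiv_right (m := (⊤ : ℕ∞)) (by simp)).differentiable (by simp)
  have key : ∀ a b : ℝ × ℝ × ℝ,
      DD a (DD b f) r = fderiv ℝ (fderiv ℝ f) r a b := by
    intro a b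
    have h1 : HasFDerivAt (fun x => fderiv ℝ f x b)
        ((ContinuousLinearMap.apply ℝ ℝ b).comp (fderiv ℝ (fderiv ℝ f) r)) r :=
      (ContinuousLinearMap.apply ℝ ℝ b).hasFDerivAt.comp r (hdf r).hasFDerivAt
    have hb : DD b f = fun x => fderiv ℝ f x b := rfl
    simp only [DD, hb, h1.fderiv]
    rfl
  rw [key, key]
  exact (hf.contDiffAt.isSymmSndFDerivAt (by rw [minSmoothness_of_isRCLikeNormedField]; exact WithTop.coe_le_coe.mpr le_top)) v w

lemma comm_xy {f} (hf : ContDiff ℝ (⊤ : ℕ∞) f) : Dx (Dy f) = Dy (Dx f) := DD_comm hf (0,1,0) (0,0,1)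
lemma comm_tx {f} (hf : ContDiff ℝ (⊤ : ℕ∞) f) : Dt (Dx f) = Dx (Dt f) := DD_comm hf (1,0,0) (0,1,0)

lemma DD_mul {f g} (hf : ContDiff ℝ (⊤ : ℕ∞) f) (hg : ContDiff ℝ (⊤ : ℕ∞) g) (v) :
    DD v (fun r => f r * g r) = fun r => DD v f r * g r + f r * DD v g r := by
  funext r
  have := fderiv_fun_mul (𝕜 := ℝ) (diff_of_smooth hf r) (diff_of_smooth hg r)
  simp [DD, this]
  ring

lemma DD_add {f g} (hf : ContDiff ℝ (⊤ : ℕ∞) f) (hg : ContDiff ℝ (⊤ : ℕ∞) g) (v) :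
    DD v (fun r => f r + g r) = fun r => DD v f r + DD v g r := by
  funext r
  simp [DD, fderiv_fun_add (diff_of_smooth hf r) (diff_of_smooth hg r)]

lemma DD_sub {f g} (hf : ContDiff ℝ (⊤ : ℕ∞) f) (hg : ContDiff ℝ (⊤ : ℕ∞) g) (v) :
    DD v (fun r => f r - g r) = fun r => DD v f r - DD v g r := by
  funext r
  simp [DD, fderiv_fun_sub (diff_of_smooth hf r) (diff_of_smooth hg r)]

lemma DD_neg {f : ℝ × ℝ × ℝ → ℝ} (v) : DD v (fun r => -f r) = fun r => -(DD v f r) := by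
  funext r; simp [DD]

lemma DD_fst (g : ℝ → ℝ) (hg : ContDiff ℝ (⊤ : ℕ∞) g) (v) :
    DD v (fun z : ℝ × ℝ × ℝ => g z.1) = fun z => deriv g z.1 * v.1 := by
  funext r
  have h1 : HasFDerivAt (fun z : ℝ × ℝ × ℝ => g z.1)
      ((ContinuousLinearMap.smulRight (1 : ℝ →L[ℝ] ℝ) (deriv g r.1)).comp
        (ContinuousLinearMap.fst ℝ ℝ (ℝ × ℝ))) r :=
    ((hg.differentiable (by simp) r.1).hasDerivAt.hasFDerivAt).comp r hasFDerivAt_fst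
  simp [DD, h1.fderiv]
  ring

lemma DD_snd_snd (v) : DD v (fun z : ℝ × ℝ × ℝ => z.2.2) = fun _ => v.2.2 := by
  funext r
  have h1 : HasFDerivAt (fun z : ℝ × ℝ × ℝ => z.2.2)
      ((ContinuousLinearMap.snd ℝ ℝ ℝ).comp (ContinuousLinearMap.snd ℝ ℝ (ℝ × ℝ))) r :=
    hasFDerivAt_snd.comp r hasFDerivAt_snd
  simp [DD, h1.fderiv]

lemma DD_coeff_mul (g : ℝ → ℝ) (hg : ContDiff ℝ (⊤ : ℕ∞) g) {w} (hw : ContDiff ℝ (⊤ : ℕ∞) w) (v) :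
    DD v (fun z => g z.1 * w z) = fun z => deriv g z.1 * v.1 * w z + g z.1 * DD v w z := by
  rw [DD_mul (f := fun z : ℝ × ℝ × ℝ => g z.1) (g := w) (hg.comp contDiff_fst) hw,
    DD_fst g hg]

lemma DD_phi3 (A : ℝ → ℝ) (hA : ContDiff ℝ (⊤ : ℕ∞) A) {w} (hw : ContDiff ℝ (⊤ : ℕ∞) w) (v) :
    DD v (fun z => -(A z.1 * w z)) =
      fun z => -(deriv A z.1 * v.1 * w z + A z.1 * DD v w z) := by
  rw [DD_neg (f := fun z => A z.1 * w z), DD_coeff_mul A hA hw]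

lemma DD_phi2 (A : ℝ → ℝ) (hA : ContDiff ℝ (⊤ : ℕ∞) A) (hA' : ContDiff ℝ (⊤ : ℕ∞) (deriv A))
    {w} (hw : ContDiff ℝ (⊤ : ℕ∞) w) (v) :
    DD v (fun z => -(A z.1 * w z) + deriv A z.1) =
      fun z => -(deriv A z.1 * v.1 * w z + A z.1 * DD v w z) +
        deriv (deriv A) z.1 * v.1 := by
  rw [DD_add (f := fun z => -(A z.1 * w z)) (g := fun z => deriv A z.1)
      ((hA.comp contDiff_fst).mul hw).neg (hA'.comp contDiff_fst),
    DD_phi3 A hA hw, DD_fst (deriv A) hA']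

lemma DD_phi (A : ℝ → ℝ) (hA : ContDiff ℝ (⊤ : ℕ∞) A) (hA' : ContDiff ℝ (⊤ : ℕ∞) (deriv A))
    {w} (hw : ContDiff ℝ (⊤ : ℕ∞) w) (v) :
    DD v (fun z => -(A z.1 * w z) + deriv A z.1 * z.2.2) =
      fun z => -(deriv A z.1 * v.1 * w z + A z.1 * DD v w z) +
        (deriv (deriv A) z.1 * v.1 * z.2.2 + deriv A z.1 * v.2.2) := by
  rw [DD_add (f := fun z => -(A z.1 * w z)) (g := fun z => deriv A z.1 * z.2.2)
      ((hA.comp contDiff_fst).mul hw).neg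
      ((hA'.comp contDiff_fst).mul (contDiff_snd.comp contDiff_snd)),
    DD_phi3 A hA hw,
    DD_coeff_mul (deriv A) hA' (w := fun z => z.2.2) (contDiff_snd.comp contDiff_snd),
    DD_snd_snd]

end Aux7

open Aux7

/-- if `u` solves the rotated Euler equation `u_txy = J(u, u_xy)` and
`A : ℝ → ℝ` is an arbitrary smooth function, then `φ₆(A) = −A(t) uₓ + A′(t) y` satisfies the linearized
equation `ℓ_F(φ₆(A)) = 0`. -/
theorem statement7 (u : ℝ × ℝ × ℝ → ℝ) (A : ℝ → ℝ)
    (hu : ContDiff ℝ (⊤ : ℕ∞) u) (hA : ContDiff ℝ (⊤ : ℕ∞) A)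
    (heq : ∀ r, Dt (Dx (Dy u)) r = Jb u (Dx (Dy u)) r) :
    ∀ r, lF u (fun z => -(A z.1 * Dx u z) + deriv A z.1 * z.2.2) r = 0 := by
  have hA' : ContDiff ℝ (⊤ : ℕ∞) (deriv A) := by
    have h : deriv A = fun t => fderiv ℝ A t 1 := by
      funext t; exact (fderiv_apply_one_eq_deriv).symm
    rw [h]; exact (hA.fderiv_right (by simp)).clm_apply contDiff_const
  have hux : ContDiff ℝ (⊤ : ℕ∞) (Dx u) := smooth_Dx hu
  have huy : ContDiff ℝ (⊤ : ℕ∞) (Dy u) := smooth_Dy hu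
  have hW : ContDiff ℝ (⊤ : ℕ∞) (Dx (Dy u)) := smooth_Dx huy
  have hWx : ContDiff ℝ (⊤ : ℕ∞) (Dx (Dx (Dy u))) := smooth_Dx hW
  have hWy : ContDiff ℝ (⊤ : ℕ∞) (Dy (Dx (Dy u))) := smooth_Dy hW
  have e1 : Dy (fun z => -(A z.1 * Dx u z) + deriv A z.1 * z.2.2)
      = fun z => -(A z.1 * Dx (Dy u) z) + deriv A z.1 := by
    rw [Dy_eq, DD_phi A hA hA' (w := Dx u) hux]
    simp only [← Dy_eq, ← comm_xy hu]
    funext z; norm_num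
  have e2 : Dx (Dy (fun z => -(A z.1 * Dx u z) + deriv A z.1 * z.2.2))
      = fun z => -(A z.1 * Dx (Dx (Dy u)) z) := by
    rw [e1, Dx_eq, DD_phi2 A hA hA' (w := Dx (Dy u)) hW]
    simp only [← Dx_eq]
    funext z; norm_num
  have e3 : Dt (Dx (Dy (fun z => -(A z.1 * Dx u z) + deriv A z.1 * z.2.2)))
      = fun z => -(deriv A z.1 * Dx (Dx (Dy u)) z
          + A z.1 * Dx (Dt (Dx (Dy u))) z) := by
    rw [e2, Dt_eq, DD_phi3 A hA (w := Dx (Dx (Dy u))) hWx]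
    simp only [← Dt_eq, comm_tx hW]
    funext z; norm_num
  have e4 : Dx (fun z => -(A z.1 * Dx u z) + deriv A z.1 * z.2.2)
      = fun z => -(A z.1 * Dx (Dx u) z) := by
    rw [Dx_eq, DD_phi A hA hA' (w := Dx u) hux]
    simp only [← Dx_eq]
    funext z; norm_num
  have e5 : Dy (Dx (Dy (fun z => -(A z.1 * Dx u z) + deriv A z.1 * z.2.2)))
      = fun z => -(A z.1 * Dx (Dy (Dx (Dy u))) z) := by
    rw [e2, Dy_eq, DD_phi3 A hA (w := Dx (Dx (Dy u))) hWx]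
    simp only [← Dy_eq, ← comm_xy hW]
    funext z; norm_num
  have e6 : Dx (Dx (Dy (fun z => -(A z.1 * Dx u z) + deriv A z.1 * z.2.2)))
      = fun z => -(A z.1 * Dx (Dx (Dx (Dy u))) z) := by
    rw [e2, Dx_eq, DD_phi3 A hA (w := Dx (Dx (Dy u))) hWx]
    simp only [← Dx_eq]
    funext z; norm_num
  have hX : Dx (Dt (Dx (Dy u))) = fun z =>
      (Dx (Dx u) z * Dy (Dx (Dy u)) z + Dx u z * Dx (Dy (Dx (Dy u))) z)
      - (Dx (Dy u) z * Dx (Dx (Dy u)) z + Dy u z * Dx (Dx (Dx (Dy u))) z) := by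
    have h0 : Dt (Dx (Dy u))
        = fun z => Dx u z * Dy (Dx (Dy u)) z - Dy u z * Dx (Dx (Dy u)) z :=
      funext heq
    rw [h0, Dx_eq,
      DD_sub (f := fun z => Dx u z * Dy (Dx (Dy u)) z)
        (g := fun z => Dy u z * Dx (Dx (Dy u)) z) (hux.mul hWy) (huy.mul hWx),
      DD_mul (f := Dx u) (g := Dy (Dx (Dy u))) hux hWy,
      DD_mul (f := Dy u) (g := Dx (Dx (Dy u))) huy hWx]
    simp only [← Dx_eq]
  intro r
  have hXr := congrFun hX r
  simp only [lF, Jb]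
  rw [e3, e5, e6, e4, e1]
  linear_combination (-(A r.1)) * hXr
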